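/- Let Z be the completely dephasing qubit channel on 2×2 complex matrices, Z(X) = diag(X₀₀, X₁₁) (equivalently, Z has Kraus operators |0⟩⟨0| and |1⟩⟨1|). Let ω be a density matrix and let ρ be a diagonal (decoherent) density matrix. Then there exists a density matrix γ with Z(γ) positive definite such that the Petz recovery map satisfies P_{Z,γ}(ω) = ρ if and only if ρ = Z(ω), i.e. if and only if ρ and ω have the same diagonal entries in the computational basis. -/

import Mathlib

open Matrix BigOperators
open scoped ComplexOrder Classical

/-- Positive-semidefinite matrix square root (0 if the matrix is not psd). -/
noncomputable def msqrt {n : ℕ} (A : Matrix (Fin n) (Fin n) ℂ) : Matrix (Fin n) (Fin n) ℂ :=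
  if h : A.PosSemidef then
    h.1.eigenvectorUnitary.1 * diagonal ((↑) ∘ (√·) ∘ h.1.eigenvalues) *
      (star h.1.eigenvectorUnitary : Matrix (Fin n) (Fin n) ℂ)
  else 0

/-- The quantum channel with Kraus operators `K i`: `E(X) = ∑ i, K i * X * (K i)ᴴ`. -/
noncomputable def kchan {n m : ℕ} (K : Fin m → Matrix (Fin n) (Fin n) ℂ)
    (X : Matrix (Fin n) (Fin n) ℂ) : Matrix (Fin n) (Fin n) ℂ :=
  ∑ i, K i * X * (K i)ᴴ

/-- The adjoint channel: `E†(Y) = ∑ i, (K i)ᴴ * Y * K i`. -/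
noncomputable def kchanAdj {n m : ℕ} (K : Fin m → Matrix (Fin n) (Fin n) ℂ)
    (Y : Matrix (Fin n) (Fin n) ℂ) : Matrix (Fin n) (Fin n) ℂ :=
  ∑ i, (K i)ᴴ * Y * K i

/-- Density matrix: positive semidefinite with trace 1. -/
def IsDensity {n : ℕ} (ρ : Matrix (Fin n) (Fin n) ℂ) : Prop :=
  ρ.PosSemidef ∧ ρ.trace = 1

/-- The Petz recovery map of the Kraus channel `K` with prior `γ`:
`P_{E,γ}(ω) = √γ · E†( E(γ)^{-1/2} ω E(γ)^{-1/2} ) · √γ`. -/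
noncomputable def petz {n m : ℕ} (K : Fin m → Matrix (Fin n) (Fin n) ℂ)
    (γ ω : Matrix (Fin n) (Fin n) ℂ) : Matrix (Fin n) (Fin n) ℂ :=
  msqrt γ * kchanAdj K ((msqrt (kchan K γ))⁻¹ * ω * (msqrt (kchan K γ))⁻¹) * msqrt γ

/-- Kraus operators |0⟩⟨0|, |1⟩⟨1| of the completely dephasing qubit channel. -/
noncomputable def dephK : Fin 2 → Matrix (Fin 2) (Fin 2) ℂ :=
  fun i => Matrix.single i i 1

/-! The dephasing channel and its adjoint both just keep the diagonal, so
`P_{Z,γ}(ω) = √γ D √γ` with `D = diag(ω₀₀/γ₀₀, ω₁₁/γ₁₁) ≥ 0`, and `D ≠ 0` because `tr ω = 1`.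
For a positive semidefinite qubit matrix `s`, the `(0,1)` entry of `s D s` is
`s₀₁ (s₀₀ d₀ + s₁₁ d₁)`, while `s₀₁ ≠ 0` forces `s₀₀, s₁₁ > 0` since `det s ≥ 0`.
Hence a diagonal output forces `√γ` to be diagonal, and then `√γ D √γ = diag(ω₀₀, ω₁₁)`.
Conversely, the maximally mixed prior has a diagonal square root. -/

open scoped MatrixOrder

section

variable {n : ℕ}

lemma msqrt_eq_sqrt {A : Matrix (Fin n) (Fin n) ℂ} (hA : A.PosSemidef) :
    msqrt A = CFC.sqrt A := by
  rw [msqrt, dif_pos hA, CFC.sqrt_eq_cfc, cfc_nnreal_eq_real _ A, hA.1.cfc_eq]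
  simp only [IsHermitian.cfc, Unitary.conjStarAlgAut_apply, Real.coe_sqrt, Real.coe_toNNReal']
  congr 3
  funext i
  simp [max_eq_left (hA.eigenvalues_nonneg i)]

lemma msqrt_mul_self {A : Matrix (Fin n) (Fin n) ℂ} (hA : A.PosSemidef) :
    msqrt A * msqrt A = A := by
  rw [msqrt_eq_sqrt hA]
  exact CFC.sqrt_mul_sqrt_self A hA.nonneg

lemma msqrt_posSemidef {A : Matrix (Fin n) (Fin n) ℂ} (hA : A.PosSemidef) :
    (msqrt A).PosSemidef := by
  rw [msqrt_eq_sqrt hA]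
  exact (CFC.sqrt_nonneg A).posSemidef

lemma msqrt_diagonal {d : Fin n → ℂ} (hd : 0 ≤ d) :
    msqrt (diagonal d) = diagonal (fun i => CFC.sqrt (d i)) := by
  rw [msqrt_eq_sqrt (PosSemidef.diagonal hd)]
  refine CFC.sqrt_unique ?_ (PosSemidef.diagonal fun i => CFC.sqrt_nonneg (d i)).nonneg
  rw [diagonal_mul_diagonal]
  exact congrArg diagonal (funext fun i => CFC.sqrt_mul_sqrt_self (d i) (hd i))

lemma kchan_single_self (X : Matrix (Fin n) (Fin n) ℂ) :
    kchan (fun i => single i i 1) X = diagonal (fun i => X i i) := by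
  simp [kchan, sum_single_eq_diagonal]

lemma kchanAdj_single_self (Y : Matrix (Fin n) (Fin n) ℂ) :
    kchanAdj (fun i => single i i 1) Y = diagonal (fun i => Y i i) := by
  simp [kchanAdj, sum_single_eq_diagonal]

lemma petz_single_self {γ : Matrix (Fin n) (Fin n) ℂ} (hγ : ∀ i, 0 < γ i i)
    (ω : Matrix (Fin n) (Fin n) ℂ) :
    petz (fun i => single i i 1) γ ω =
      msqrt γ * diagonal (fun i => ω i i / γ i i) * msqrt γ := by
  set c : Fin n → ℂ := fun i => CFC.sqrt (γ i i)
  have hc : ∀ i, c i * c i = γ i i := fun i => CFC.sqrt_mul_sqrt_self _ (hγ i).le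
  have hc₀ : ∀ i, c i ≠ 0 := fun i h => (hγ i).ne' (by rw [← hc i, h, zero_mul])
  have hinv : (diagonal c)⁻¹ = diagonal c⁻¹ := by
    refine inv_eq_right_inv ?_
    rw [diagonal_mul_diagonal, ← diagonal_one]
    exact congrArg diagonal (funext fun i => mul_inv_cancel₀ (hc₀ i))
  rw [petz, kchan_single_self, msqrt_diagonal fun i => (hγ i).le, hinv, kchanAdj_single_self]
  congr 3
  funext i
  rw [mul_diagonal, diagonal_mul, ← hc i, Pi.inv_apply]
  field_simp

lemma petz_single_self_of_isDiag {γ : Matrix (Fin n) (Fin n) ℂ} (hγ : γ.PosSemidef)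
    (hγ₀ : ∀ i, 0 < γ i i) (hs : (msqrt γ).IsDiag) (ω : Matrix (Fin n) (Fin n) ℂ) :
    petz (fun i => single i i 1) γ ω = kchan (fun i => single i i 1) ω := by
  obtain ⟨e, he⟩ : ∃ e, msqrt γ = diagonal e := ⟨_, hs.diagonal_diag.symm⟩
  have hγe : γ = diagonal (fun i => e i * e i) := by
    rw [← msqrt_mul_self hγ, he, diagonal_mul_diagonal]
  rw [petz_single_self hγ₀, kchan_single_self, he, diagonal_mul_diagonal, diagonal_mul_diagonal]
  congr 1
  funext i
  have he₀ : e i ≠ 0 := mul_self_ne_zero.mp (by simpa [hγe] using (hγ₀ i).ne')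
  rw [hγe, diagonal_apply_eq]
  field_simp

end

lemma Matrix.PosSemidef.isDiag_of_mul_diagonal_mul_apply_zero_one {s : Matrix (Fin 2) (Fin 2) ℂ}
    (hs : s.PosSemidef) {d : Fin 2 → ℂ} (hd : 0 ≤ d) (hd₀ : d ≠ 0)
    (h : (s * diagonal d * s) 0 1 = 0) : s.IsDiag := by
  have hs₁₀ : s 1 0 = star (s 0 1) := (hs.1.apply 1 0).symm
  suffices hs₀₁ : s 0 1 = 0 by
    intro i j hij
    fin_cases i <;> fin_cases j <;> simp_all
  by_contra hc
  have hprod : 0 < s 0 0 * s 1 1 := by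
    have hdet := hs.det_nonneg
    rw [det_fin_two, hs₁₀, sub_nonneg] at hdet
    refine lt_of_lt_of_le ?_ hdet
    rw [Complex.star_def, Complex.mul_conj]
    exact_mod_cast Complex.normSq_pos.mpr hc
  have h₀₀ : 0 < s 0 0 := lt_of_le_of_ne hs.diag_nonneg fun h => by simp [← h] at hprod
  have h₁₁ : 0 < s 1 1 := lt_of_le_of_ne hs.diag_nonneg fun h => by simp [← h] at hprod
  have hsum : s 0 0 * d 0 + s 1 1 * d 1 = 0 := by
    have : s 0 1 * (s 0 0 * d 0 + s 1 1 * d 1) = 0 := by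
      rw [← h]
      simp only [mul_apply, Fin.sum_univ_two, diagonal_apply_eq, diagonal_apply_ne _ one_ne_zero,
        diagonal_apply_ne _ zero_ne_one, mul_zero, add_zero, zero_add]
      ring
    exact (mul_eq_zero.mp this).resolve_left hc
  obtain ⟨h0, h1⟩ := (add_eq_zero_iff_of_nonneg (mul_nonneg h₀₀.le (hd 0))
    (mul_nonneg h₁₁.le (hd 1))).mp hsum
  refine hd₀ (funext fun i => ?_)
  fin_cases i
  · simpa [h₀₀.ne'] using h0
  · simpa [h₁₁.ne'] using h1

theorem dephasing_prior_hacking_iff_general {ρ ω : Matrix (Fin 2) (Fin 2) ℂ}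
    (hω : IsDensity ω)
    (hρdiag : ρ = Matrix.diagonal (fun i => ρ i i)) :
    (∃ γ : Matrix (Fin 2) (Fin 2) ℂ, IsDensity γ ∧ (kchan dephK γ).PosDef ∧
      petz dephK γ ω = ρ) ↔ ρ = kchan dephK ω := by
  unfold dephK
  have posDef_iff (γ : Matrix (Fin 2) (Fin 2) ℂ) :
      (kchan (fun i => single i i 1) γ).PosDef ↔ ∀ i, 0 < γ i i := by
    rw [kchan_single_self, posDef_diagonal_iff]
  constructor
  · rintro ⟨γ, ⟨hγ, -⟩, hpos, rfl⟩
    rw [posDef_iff] at hpos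
    have hd : 0 ≤ fun i => ω i i / γ i i := fun i => div_nonneg hω.1.diag_nonneg (hpos i).le
    have hd₀ : (fun i => ω i i / γ i i) ≠ 0 := fun h => by
      have hω₀ : ∀ i, ω i i = 0 := fun i => by simpa [(hpos i).ne'] using congrFun h i
      simpa [trace_fin_two, hω₀] using hω.2
    have hs := (msqrt_posSemidef hγ).isDiag_of_mul_diagonal_mul_apply_zero_one hd hd₀ (by
      rw [← petz_single_self hpos, hρdiag]; simp)
    exact petz_single_self_of_isDiag hγ hpos hs ω
  · rintro rfl
    have hhalf : (0 : Fin 2 → ℂ) ≤ fun _ => 1 / 2 := fun _ => by positivity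
    have hpos : ∀ i, 0 < (diagonal fun _ : Fin 2 => (1 / 2 : ℂ)) i i := fun i => by
      rw [diagonal_apply_eq]; positivity
    have hs : (msqrt (diagonal fun _ : Fin 2 => (1 / 2 : ℂ))).IsDiag := by
      rw [msqrt_diagonal hhalf]
      exact isDiag_diagonal _
    refine ⟨_, ⟨PosSemidef.diagonal hhalf, ?_⟩, (posDef_iff _).mpr hpos,
      petz_single_self_of_isDiag (PosSemidef.diagonal hhalf) hpos hs ω⟩
    rw [trace_fin_two]; norm_num

theorem dephasing_prior_hacking_iff {ρ ω : Matrix (Fin 2) (Fin 2) ℂ}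
    (hω : IsDensity ω) (hρ : IsDensity ρ)
    (hρdiag : ρ = Matrix.diagonal (fun i => ρ i i)) :
    (∃ γ : Matrix (Fin 2) (Fin 2) ℂ, IsDensity γ ∧ (kchan dephK γ).PosDef ∧
      petz dephK γ ω = ρ) ↔ ρ = kchan dephK ω :=
  dephasing_prior_hacking_iff_general hω hρdiag
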